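/- Let G be a finite simple graph with oriented edges and triangles. The space ℝ^E of edge vectors admits an orthogonal decomposition ℝ^E = im(B) ⊕ ker(H) ⊕ im(Cᵀ), where H = B·Bᵀ + Cᵀ·C is the Helmholtzian matrix (graph Helmholtz decomposition). -/

import Mathlib

open Matrix

/-- A finite simple graph together with arbitrary orientations on its edges
(indexed by `E`, each with a tail and a head) and on its triangles
(indexed by `T`, each given as a cyclic triple of vertices). -/
structure GraphData (V E T : Type*) where
  G : SimpleGraph V
  tail : E → V
  head : E → V
  tri1 : T → V
  tri2 : T → V
  tri3 : T → V
  edge_adj : ∀ e, G.Adj (tail e) (head e)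
  edge_inj : ∀ e e' : E, s(tail e, head e) = s(tail e', head e') → e = e'
  edge_surj : ∀ a b, G.Adj a b → ∃ e, s(tail e, head e) = s(a, b)
  tri_adj12 : ∀ τ, G.Adj (tri1 τ) (tri2 τ)
  tri_adj23 : ∀ τ, G.Adj (tri2 τ) (tri3 τ)
  tri_adj31 : ∀ τ, G.Adj (tri3 τ) (tri1 τ)
  tri_inj : ∀ τ τ' : T, ({tri1 τ, tri2 τ, tri3 τ} : Set V) = {tri1 τ', tri2 τ', tri3 τ'} → τ = τ'
  tri_surj : ∀ a b c, G.Adj a b → G.Adj b c → G.Adj c a →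
    ∃ τ, ({tri1 τ, tri2 τ, tri3 τ} : Set V) = {a, b, c}

variable {V E T : Type*}

/-- The signed edge-vertex incidence matrix `B`. -/
def Bmat [DecidableEq V] (D : GraphData V E T) : Matrix E V ℝ := fun e v =>
  if v = D.head e then 1 else if v = D.tail e then -1 else 0

/-- The signed triangle-edge incidence matrix `C`. -/
def Cmat [DecidableEq V] (D : GraphData V E T) : Matrix T E ℝ := fun τ e =>
  if (D.tail e, D.head e) = (D.tri1 τ, D.tri2 τ) ∨ (D.tail e, D.head e) = (D.tri2 τ, D.tri3 τ) ∨
      (D.tail e, D.head e) = (D.tri3 τ, D.tri1 τ) then 1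
  else if (D.head e, D.tail e) = (D.tri1 τ, D.tri2 τ) ∨ (D.head e, D.tail e) = (D.tri2 τ, D.tri3 τ) ∨
      (D.head e, D.tail e) = (D.tri3 τ, D.tri1 τ) then -1
  else 0

/-- The Helmholtzian matrix `H = B * Bᵀ + Cᵀ * C`. -/
def Hmat [DecidableEq V] [Fintype V] [Fintype T] (D : GraphData V E T) : Matrix E E ℝ :=
  Bmat D * (Bmat D)ᵀ + (Cmat D)ᵀ * Cmat D

/-- The nullity of the Helmholtzian matrix, i.e. the dimension of its kernel. -/
noncomputable def nullity [DecidableEq V] [Fintype V] [Fintype T] [Fintype E]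
    (D : GraphData V E T) : ℕ :=
  Module.finrank ℝ ↥(LinearMap.ker (Hmat D).mulVecLin)

/-- The edge `e` lies in the triangle `τ`. -/
def edgeInTri (D : GraphData V E T) (e : E) (τ : T) : Prop :=
  D.tail e ∈ ({D.tri1 τ, D.tri2 τ, D.tri3 τ} : Set V) ∧
  D.head e ∈ ({D.tri1 τ, D.tri2 τ, D.tri3 τ} : Set V)

/-- The triangle degree of an edge: the number of triangles containing it. -/
def triDeg [DecidableEq V] [Fintype T] (D : GraphData V E T) (e : E) : ℕ :=
  (Finset.univ.filter fun τ =>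
    D.tail e ∈ ({D.tri1 τ, D.tri2 τ, D.tri3 τ} : Finset V) ∧
    D.head e ∈ ({D.tri1 τ, D.tri2 τ, D.tri3 τ} : Finset V)).card

/-! The Helmholtzian is `MᵀM` for the stacked matrix `M = [Bᵀ; C]`, so its kernel is
`ker M = ker Bᵀ ⊓ ker C`. Over an ordered field the row space of a matrix is orthogonal to its
kernel and, by rank–nullity with `rank Mᵀ = rank M`, complementary to it; the row space of `M` is
`im B ⊔ im Cᵀ`. The three pieces are pairwise orthogonal because `⟨Bu, y⟩ = ⟨u, Bᵀy⟩`,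
`⟨x, Cᵀw⟩ = ⟨Cx, w⟩` and `C B = 0`: the boundary of a triangle's boundary telescopes around the
cycle `tri1 → tri2 → tri3 → tri1`. -/

namespace Matrix

section CommSemiring

variable {R m n₁ n₂ k : Type*} [CommSemiring R]

theorem dotProduct_eq_zero_of_mem_range_transpose_of_mem_ker [Fintype m] [Fintype k]
    {M : Matrix k m R} {x y : m → R} (hx : x ∈ LinearMap.range Mᵀ.mulVecLin)
    (hy : y ∈ LinearMap.ker M.mulVecLin) :
    x ⬝ᵥ y = 0 := by
  obtain ⟨u, rfl⟩ := hx
  rw [LinearMap.mem_ker, mulVecLin_apply] at hy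
  rw [mulVecLin_apply, mulVec_transpose, ← dotProduct_mulVec, hy, dotProduct_zero]

theorem range_mulVecLin_fromCols [Fintype n₁] [Fintype n₂] (A₁ : Matrix m n₁ R)
    (A₂ : Matrix m n₂ R) :
    LinearMap.range (fromCols A₁ A₂).mulVecLin =
      LinearMap.range A₁.mulVecLin ⊔ LinearMap.range A₂.mulVecLin := by
  ext x
  simp only [Submodule.mem_sup, LinearMap.mem_range, mulVecLin_apply]
  constructor
  · rintro ⟨v, rfl⟩
    exact ⟨_, ⟨_, rfl⟩, _, ⟨_, rfl⟩, (fromCols_mulVec A₁ A₂ v).symm⟩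
  · rintro ⟨_, ⟨v₁, rfl⟩, _, ⟨v₂, rfl⟩, rfl⟩
    exact ⟨Sum.elim v₁ v₂, fromCols_mulVec_sumElim A₁ A₂ v₁ v₂⟩

theorem ker_mulVecLin_fromRows {m₁ m₂ : Type*} [Fintype m] (A₁ : Matrix m₁ m R)
    (A₂ : Matrix m₂ m R) :
    LinearMap.ker (fromRows A₁ A₂).mulVecLin =
      LinearMap.ker A₁.mulVecLin ⊓ LinearMap.ker A₂.mulVecLin := by
  ext x
  simp [← Sum.elim_zero_zero, Sum.elim_eq_iff]

theorem transpose_fromRows_mul_fromRows [Fintype n₁] [Fintype k] (B : Matrix m n₁ R)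
    (C : Matrix k m R) : (fromRows Bᵀ C)ᵀ * fromRows Bᵀ C = B * Bᵀ + Cᵀ * C := by
  rw [transpose_fromRows, transpose_transpose, fromCols_mul_fromRows]

end CommSemiring

section LinearOrderedField

variable {R m n k : Type*} [Field R] [LinearOrder R] [IsStrictOrderedRing R] [Fintype m]
  [Fintype k]

theorem disjoint_range_transpose_ker (M : Matrix k m R) :
    Disjoint (LinearMap.range Mᵀ.mulVecLin) (LinearMap.ker M.mulVecLin) := by
  rw [Submodule.disjoint_def]
  intro x hx hx'
  exact dotProduct_self_eq_zero.mp (dotProduct_eq_zero_of_mem_range_transpose_of_mem_ker hx hx')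

theorem range_transpose_sup_ker (M : Matrix k m R) :
    LinearMap.range Mᵀ.mulVecLin ⊔ LinearMap.ker M.mulVecLin = ⊤ := by
  refine Submodule.eq_top_of_disjoint _ _ (le_of_eq ?_) (disjoint_range_transpose_ker M)
  rw [← LinearMap.finrank_range_add_finrank_ker M.mulVecLin]
  congr 1
  exact (rank_transpose M).symm

variable [Fintype n] (B : Matrix m n R) (C : Matrix k m R)

theorem ker_mulVecLin_mul_transpose_add_transpose_mul :
    LinearMap.ker (B * Bᵀ + Cᵀ * C).mulVecLin =
      LinearMap.ker Bᵀ.mulVecLin ⊓ LinearMap.ker C.mulVecLin := by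
  rw [← transpose_fromRows_mul_fromRows, ker_mulVecLin_transpose_mul_self, ker_mulVecLin_fromRows]

theorem range_sup_ker_mul_transpose_add_transpose_mul_sup_range :
    LinearMap.range B.mulVecLin ⊔ LinearMap.ker (B * Bᵀ + Cᵀ * C).mulVecLin ⊔
      LinearMap.range Cᵀ.mulVecLin = ⊤ := by
  have h := range_transpose_sup_ker (fromRows Bᵀ C)
  rw [transpose_fromRows, transpose_transpose, range_mulVecLin_fromCols, ker_mulVecLin_fromRows,
    ← ker_mulVecLin_mul_transpose_add_transpose_mul] at h
  rw [← h]
  ac_rfl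

end LinearOrderedField

end Matrix

namespace GraphData

def IsSide (D : GraphData V E T) (τ : T) (a b : V) : Prop :=
  (a, b) = (D.tri1 τ, D.tri2 τ) ∨ (a, b) = (D.tri2 τ, D.tri3 τ) ∨ (a, b) = (D.tri3 τ, D.tri1 τ)

instance [DecidableEq V] (D : GraphData V E T) (τ : T) (a b : V) : Decidable (D.IsSide τ a b) :=
  inferInstanceAs (Decidable (_ ∨ _ ∨ _))

theorem IsSide.not_swap {D : GraphData V E T} {τ : T} {a b : V} (h : D.IsSide τ a b) :
    ¬ D.IsSide τ b a := by
  have h12 := (D.tri_adj12 τ).ne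
  have h23 := (D.tri_adj23 τ).ne
  have h31 := (D.tri_adj31 τ).ne
  simp only [IsSide, Prod.mk.injEq] at h ⊢
  grind

end GraphData

section Incidence

variable [DecidableEq V]

theorem Bmat_apply (D : GraphData V E T) (e : E) (v : V) :
    Bmat D e v = (if v = D.head e then 1 else 0) - (if v = D.tail e then 1 else 0) := by
  have := (D.edge_adj e).ne
  unfold Bmat
  split_ifs <;> simp_all

theorem Cmat_apply (D : GraphData V E T) (τ : T) (e : E) :
    Cmat D τ e = if D.IsSide τ (D.tail e) (D.head e) then 1
      else if D.IsSide τ (D.head e) (D.tail e) then -1 else 0 :=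
  rfl

theorem Cmat_mul_Bmat_apply_of_isSide {D : GraphData V E T} {τ : T} {e : E} {a b : V}
    (hab : D.IsSide τ a b) (he : s(D.tail e, D.head e) = s(a, b)) (v : V) :
    Cmat D τ e * Bmat D e v = (if v = b then 1 else 0) - (if v = a then 1 else 0) := by
  rw [Cmat_apply, Bmat_apply]
  rcases Sym2.eq_iff.mp he with ⟨ha, hb⟩ | ⟨hb, ha⟩
  · rw [ha, hb, if_pos hab, one_mul]
  · rw [ha, hb, if_neg hab.not_swap, if_pos hab]
    ring

theorem sym2_eq_side_of_Cmat_ne_zero {D : GraphData V E T} {τ : T} {e : E}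
    (h : Cmat D τ e ≠ 0) :
    s(D.tail e, D.head e) = s(D.tri1 τ, D.tri2 τ) ∨
      s(D.tail e, D.head e) = s(D.tri2 τ, D.tri3 τ) ∨
      s(D.tail e, D.head e) = s(D.tri3 τ, D.tri1 τ) := by
  rw [Cmat_apply] at h
  simp only [GraphData.IsSide, Sym2.eq_iff, Prod.mk.injEq] at h ⊢
  split_ifs at h <;> tauto

theorem Cmat_mul_Bmat [Fintype E] (D : GraphData V E T) : Cmat D * Bmat D = 0 := by
  classical
  ext τ v
  obtain ⟨e₁, he₁⟩ := D.edge_surj _ _ (D.tri_adj12 τ)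
  obtain ⟨e₂, he₂⟩ := D.edge_surj _ _ (D.tri_adj23 τ)
  obtain ⟨e₃, he₃⟩ := D.edge_surj _ _ (D.tri_adj31 τ)
  have h12 := (D.tri_adj12 τ).ne
  have h23 := (D.tri_adj23 τ).ne
  have h31 := (D.tri_adj31 τ).ne
  have hsupport : ∀ e ∉ ({e₁, e₂, e₃} : Finset E), Cmat D τ e * Bmat D e v = 0 := by
    intro e he
    simp only [Finset.mem_insert, Finset.mem_singleton, not_or] at he
    refine mul_eq_zero_of_left ?_ _
    by_contra h
    rcases sym2_eq_side_of_Cmat_ne_zero h with h | h | h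
    exacts [he.1 (D.edge_inj _ _ (h.trans he₁.symm)), he.2.1 (D.edge_inj _ _ (h.trans he₂.symm)),
      he.2.2 (D.edge_inj _ _ (h.trans he₃.symm))]
  have h₁₂ : e₁ ≠ e₂ := by rintro rfl; rw [he₁, Sym2.eq_iff] at he₂; tauto
  have h₁₃ : e₁ ≠ e₃ := by rintro rfl; rw [he₁, Sym2.eq_iff] at he₃; tauto
  have h₂₃ : e₂ ≠ e₃ := by rintro rfl; rw [he₂, Sym2.eq_iff] at he₃; tauto
  rw [mul_apply, ← Finset.sum_subset (Finset.subset_univ _) fun e _ ↦ hsupport e,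
    Finset.sum_insert (by simp [h₁₂, h₁₃]), Finset.sum_insert (by simp [h₂₃]),
    Finset.sum_singleton, Cmat_mul_Bmat_apply_of_isSide (Or.inl rfl) he₁,
    Cmat_mul_Bmat_apply_of_isSide (Or.inr (Or.inl rfl)) he₂,
    Cmat_mul_Bmat_apply_of_isSide (Or.inr (Or.inr rfl)) he₃, Matrix.zero_apply]
  ring

end Incidence

theorem helmholtz_decomposition [DecidableEq V] [Fintype V] [Fintype E] [Fintype T]
    (D : GraphData V E T) :
    (LinearMap.range (Bmat D).mulVecLin ⊔ LinearMap.ker (Hmat D).mulVecLin ⊔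
        LinearMap.range ((Cmat D)ᵀ).mulVecLin = ⊤) ∧
    (∀ x ∈ LinearMap.range (Bmat D).mulVecLin, ∀ y ∈ LinearMap.ker (Hmat D).mulVecLin,
      x ⬝ᵥ y = 0) ∧
    (∀ x ∈ LinearMap.range (Bmat D).mulVecLin, ∀ y ∈ LinearMap.range ((Cmat D)ᵀ).mulVecLin,
      x ⬝ᵥ y = 0) ∧
    (∀ x ∈ LinearMap.ker (Hmat D).mulVecLin, ∀ y ∈ LinearMap.range ((Cmat D)ᵀ).mulVecLin,
      x ⬝ᵥ y = 0) := by
  have hker : LinearMap.ker (Hmat D).mulVecLin =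
      LinearMap.ker (Bmat D)ᵀ.mulVecLin ⊓ LinearMap.ker (Cmat D).mulVecLin :=
    ker_mulVecLin_mul_transpose_add_transpose_mul _ _
  have hrange_le_ker : LinearMap.range (Bmat D).mulVecLin ≤ LinearMap.ker (Cmat D).mulVecLin :=
    LinearMap.range_le_ker_iff.mpr (by rw [← mulVecLin_mul, Cmat_mul_Bmat, mulVecLin_zero])
  refine ⟨range_sup_ker_mul_transpose_add_transpose_mul_sup_range _ _, ?_, ?_, ?_⟩
  · intro x hx y hy
    rw [← transpose_transpose (Bmat D)] at hx
    exact dotProduct_eq_zero_of_mem_range_transpose_of_mem_ker hx (hker ▸ hy).1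
  · intro x hx y hy
    rw [dotProduct_comm]
    exact dotProduct_eq_zero_of_mem_range_transpose_of_mem_ker hy (hrange_le_ker hx)
  · intro x hx y hy
    rw [dotProduct_comm]
    exact dotProduct_eq_zero_of_mem_range_transpose_of_mem_ker hy (hker ▸ hx).2
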